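/- arXiv:1503.07842 — 3 statements merged into one kernel-verified Lean document; each statement's English description precedes it below -/
import Mathlib

section
/- Let L = [[L1, L2],[L2^T, L3]] be the Laplacian matrix of a connected graph, written in block form, with L1 nonsingular. Set S = L3 - L2^T L1^{-1} L2. Then the matrix X = [[L1^{-1} + L1^{-1} L2 S^# L2^T L1^{-1}, -L1^{-1} L2 S^#],[-S^# L2^T L1^{-1}, S^#]] is a symmetric {1}-inverse of L, i.e., X = X^T and L X L = L. -/
/-!
Write `M = [[A, B], [C, D]]` with `A` invertible and Schur complement `S = D - C A⁻¹ B`.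
The block LDU factorization `M = [[1, 0], [C A⁻¹, 1]] · diag(A, S) · [[1, A⁻¹ B], [0, 1]]`
exhibits `X` as `[[1, -A⁻¹ B], [0, 1]] · diag(A⁻¹, S^#) · [[1, 0], [-C A⁻¹, 1]]`, the product of
the inverses of the two unitriangular factors around a `{1}`-inverse of `diag(A, S)`; hence
`M X M = M` as soon as `S S^# S = S`. For the Laplacian, `C = Bᵀ` and `A`, `D` are symmetric, so
`S` is symmetric, and then so is its group inverse by uniqueness; `X` is then visibly symmetric.
-/

open Matrix

def IsGroupInverse {M : Type*} [Mul M] (a g : M) : Prop :=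
  a * g * a = a ∧ g * a * g = g ∧ a * g = g * a

def IsInnerInverse {M : Type*} [Mul M] (a x : M) : Prop :=
  a * x * a = a

namespace IsGroupInverse

variable {M : Type*}

theorem unique [Semigroup M] {a g h : M} (hg : IsGroupInverse a g) (hh : IsGroupInverse a h) :
    g = h := by
  obtain ⟨hg₁, hg₂, hg₃⟩ := hg
  obtain ⟨hh₁, hh₂, hh₃⟩ := hh
  have hag : a * g = a * h := by
    calc a * g = h * a * (a * g) := by rw [← hh₃, ← mul_assoc, hh₁]
      _ = h * a * (g * a) := by rw [hg₃]
      _ = h * (a * g * a) := by simp only [mul_assoc]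
      _ = a * h := by rw [hg₁, hh₃]
  calc g = g * (a * g) := by rw [← mul_assoc, hg₂]
    _ = a * h * h := by rw [hag, ← mul_assoc, ← hg₃, hag]
    _ = h := by rw [hh₃, hh₂]

theorem transpose {n α : Type*} [Fintype n] [CommSemiring α] {A G : Matrix n n α}
    (h : IsGroupInverse A G) : IsGroupInverse Aᵀ Gᵀ := by
  obtain ⟨h₁, h₂, h₃⟩ := h
  refine ⟨?_, ?_, ?_⟩
  · rw [← transpose_mul, ← transpose_mul, ← Matrix.mul_assoc, h₁]
  · rw [← transpose_mul, ← transpose_mul, ← Matrix.mul_assoc, h₂]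
  · rw [← transpose_mul, ← transpose_mul, h₃]

theorem isSymm {n α : Type*} [Fintype n] [CommSemiring α] {A G : Matrix n n α}
    (hA : A.IsSymm) (h : IsGroupInverse A G) : G.IsSymm :=
  (hA.eq ▸ h.transpose).unique h

end IsGroupInverse

theorem IsInnerInverse.mul_mul {M : Type*} [Monoid M] {p p' d d' q q' : M}
    (hp : p' * p = 1) (hq : q * q' = 1) (hd : IsInnerInverse d d') :
    IsInnerInverse (p * d * q) (q' * d' * p') := by
  calc p * d * q * (q' * d' * p') * (p * d * q)
      = p * (d * (q * q') * d' * (p' * p) * d) * q := by simp only [mul_assoc]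
    _ = p * d * q := by rw [hp, hq, mul_one, mul_one, hd]

section Blocks

variable {m n α : Type*} [Fintype m] [CommRing α]

theorem Matrix.IsSymm.transpose_mul_mul {A : Matrix m m α} (hA : A.IsSymm) (B : Matrix m n α) :
    (Bᵀ * A * B).IsSymm := by
  simp only [IsSymm, transpose_mul, transpose_transpose, hA.eq, Matrix.mul_assoc]

variable [Fintype n]

theorem isInnerInverse_fromBlocks_zero {A A' : Matrix m m α} {D D' : Matrix n n α}
    (hA : IsInnerInverse A A') (hD : IsInnerInverse D D') :
    IsInnerInverse (fromBlocks A 0 0 D) (fromBlocks A' 0 0 D') := by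
  simp only [IsInnerInverse, fromBlocks_multiply, Matrix.mul_zero, Matrix.zero_mul, add_zero,
    zero_add]
  rw [hA, hD]

variable [DecidableEq m]

noncomputable def schurBlockInverse (A : Matrix m m α) (B : Matrix m n α) (C : Matrix n m α)
    (Sh : Matrix n n α) : Matrix (m ⊕ n) (m ⊕ n) α :=
  fromBlocks (A⁻¹ + A⁻¹ * B * Sh * C * A⁻¹) (-(A⁻¹ * B * Sh)) (-(Sh * C * A⁻¹)) Sh

theorem isSymm_schurBlockInverse {A : Matrix m m α} (hA : A.IsSymm) (B : Matrix m n α)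
    {Sh : Matrix n n α} (hSh : Sh.IsSymm) : (schurBlockInverse A B Bᵀ Sh).IsSymm := by
  refine IsSymm.fromBlocks (hA.inv.add ?_) ?_ hSh
  · simpa [transpose_mul, hA.inv.eq, Matrix.mul_assoc] using hSh.transpose_mul_mul (Bᵀ * A⁻¹)
  · simp [transpose_mul, hA.inv.eq, hSh.eq, Matrix.mul_assoc]

variable [DecidableEq n]

theorem schurBlockInverse_eq (A : Matrix m m α) (B : Matrix m n α) (C : Matrix n m α)
    (Sh : Matrix n n α) :
    schurBlockInverse A B C Sh =
      fromBlocks 1 (-(A⁻¹ * B)) 0 1 * fromBlocks A⁻¹ 0 0 Sh * fromBlocks 1 0 (-(C * A⁻¹)) 1 := by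
  simp [schurBlockInverse, fromBlocks_multiply, Matrix.mul_assoc]

theorem isInnerInverse_schurBlockInverse {A : Matrix m m α} (hA : IsUnit A.det)
    (B : Matrix m n α) (C : Matrix n m α) (D : Matrix n n α) {Sh : Matrix n n α}
    (hSh : IsInnerInverse (D - C * A⁻¹ * B) Sh) :
    IsInnerInverse (fromBlocks A B C D) (schurBlockInverse A B C Sh) := by
  let _ := invertibleOfIsUnitDet A hA
  rw [fromBlocks_eq_of_invertible₁₁, invOf_eq_nonsing_inv, schurBlockInverse_eq]
  refine IsInnerInverse.mul_mul ?_ ?_ (isInnerInverse_fromBlocks_zero ?_ hSh)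
  · simp [fromBlocks_multiply]
  · simp [fromBlocks_multiply]
  · simp [IsInnerInverse, mul_nonsing_inv A hA]

end Blocks

theorem lap_symmetric_one_inverse_blocks_general {m k : ℕ}
    (G : SimpleGraph (Fin m ⊕ Fin k)) [DecidableRel G.Adj]
    (L1 : Matrix (Fin m) (Fin m) ℝ) (L2 : Matrix (Fin m) (Fin k) ℝ)
    (L3 : Matrix (Fin k) (Fin k) ℝ)
    (hL : G.lapMatrix ℝ = Matrix.fromBlocks L1 L2 L2ᵀ L3)
    (hL1 : IsUnit L1.det)
    (S Sh : Matrix (Fin k) (Fin k) ℝ)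
    (hS : S = L3 - L2ᵀ * L1⁻¹ * L2)
    (hSh : S * Sh * S = S ∧ Sh * S * Sh = Sh ∧ S * Sh = Sh * S)
    (X : Matrix (Fin m ⊕ Fin k) (Fin m ⊕ Fin k) ℝ)
    (hX : X = Matrix.fromBlocks
      (L1⁻¹ + L1⁻¹ * L2 * Sh * L2ᵀ * L1⁻¹) (-(L1⁻¹ * L2 * Sh))
      (-(Sh * L2ᵀ * L1⁻¹)) Sh) :
    Xᵀ = X ∧ G.lapMatrix ℝ * X * G.lapMatrix ℝ = G.lapMatrix ℝ := by
  obtain ⟨hL1s, -, -, hL3s⟩ := isSymm_fromBlocks_iff.mp (hL ▸ G.isSymm_lapMatrix (R := ℝ))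
  have hSs : S.IsSymm := hS ▸ hL3s.sub (hL1s.inv.transpose_mul_mul L2)
  have hX' : X = schurBlockInverse L1 L2 L2ᵀ Sh := hX
  subst hX' hS
  exact ⟨isSymm_schurBlockInverse hL1s L2 (IsGroupInverse.isSymm hSs hSh),
    hL ▸ isInnerInverse_schurBlockInverse hL1 L2 L2ᵀ L3 hSh.1⟩

/-- If the Laplacian of a connected graph is partitioned as `[[L1, L2], [L2ᵀ, L3]]` with
`L1` nonsingular, and `S = L3 - L2ᵀ L1⁻¹ L2` with group inverse `Sh`, then the displayed
block matrix `X` is a symmetric `{1}`-inverse of the Laplacian. -/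
theorem lap_symmetric_one_inverse_blocks {m k : ℕ}
    (G : SimpleGraph (Fin m ⊕ Fin k)) [DecidableRel G.Adj] (hconn : G.Connected)
    (L1 : Matrix (Fin m) (Fin m) ℝ) (L2 : Matrix (Fin m) (Fin k) ℝ)
    (L3 : Matrix (Fin k) (Fin k) ℝ)
    (hL : G.lapMatrix ℝ = Matrix.fromBlocks L1 L2 L2ᵀ L3)
    (hL1 : IsUnit L1.det)
    (S Sh : Matrix (Fin k) (Fin k) ℝ)
    (hS : S = L3 - L2ᵀ * L1⁻¹ * L2)
    (hSh : S * Sh * S = S ∧ Sh * S * Sh = Sh ∧ S * Sh = Sh * S)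
    (X : Matrix (Fin m ⊕ Fin k) (Fin m ⊕ Fin k) ℝ)
    (hX : X = Matrix.fromBlocks
      (L1⁻¹ + L1⁻¹ * L2 * Sh * L2ᵀ * L1⁻¹) (-(L1⁻¹ * L2 * Sh))
      (-(Sh * L2ᵀ * L1⁻¹)) Sh) :
    Xᵀ = X ∧ G.lapMatrix ℝ * X * G.lapMatrix ℝ = G.lapMatrix ℝ :=
  lap_symmetric_one_inverse_blocks_general G L1 L2 L3 hL hL1 S Sh hS hSh X hX
end

section
/- Let G1 be an r1-regular graph on n1 vertices and G2 any graph on n2 vertices. With vertices of the corona G1∘G2 ordered as V(G1) followed by the copies W_1,...,W_{n2} (where W_j collects the j-th vertex of all n1 copies of G2), the Laplacian of G1∘G2 has block form [[L(G1) + n2·I_{n1}, -1_{n2}^T ⊗ I_{n1}],[-1_{n2} ⊗ I_{n1}, (L(G2) + I_{n2}) ⊗ I_{n1}]]. -/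
open Matrix Kronecker

/-- The corona `G1 ∘ G2`: one copy of `G1` and `n1` copies of `G2`, with the `i`-th vertex
of `G1` joined to every vertex in the `i`-th copy of `G2`. The copy of vertex `w` of `G2`
belonging to the `i`-th copy is encoded as `Sum.inr (w, i)`, so the second block of vertices
is ordered as `W_1, ..., W_{n2}` where `W_j` collects the `j`-th vertex of all copies. -/
def corona {V1 V2 : Type*} (G1 : SimpleGraph V1) (G2 : SimpleGraph V2) :
    SimpleGraph (V1 ⊕ V2 × V1) where
  Adj x y :=
    match x, y with
    | .inl i, .inl j => G1.Adj i j
    | .inl i, .inr (_, k) => i = k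
    | .inr (_, k), .inl i => k = i
    | .inr (w, i), .inr (w', j) => i = j ∧ G2.Adj w w'
  symm := ⟨by
    rintro (i | ⟨w, i⟩) (j | ⟨w', j⟩) h
    · exact h.symm
    · exact h.symm
    · exact h.symm
    · exact ⟨h.1.symm, h.2.symm⟩⟩
  loopless := ⟨by
    rintro (i | ⟨w, i⟩) h
    · exact G1.irrefl h
    · exact G2.irrefl h.2⟩

noncomputable instance {V1 V2 : Type*} (G1 : SimpleGraph V1) (G2 : SimpleGraph V2) :
    DecidableRel (corona G1 G2).Adj := Classical.decRel _

noncomputable def corona_neighborSet_inl {V1 V2 : Type*} (G1 : SimpleGraph V1) (G2 : SimpleGraph V2)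
    (i : V1) :
    (corona G1 G2).neighborSet (Sum.inl i) ≃ (G1.neighborSet i ⊕ V2) where
  toFun x := match x with
    | ⟨Sum.inl j, h⟩ => Sum.inl ⟨j, h⟩
    | ⟨Sum.inr (w, _), _⟩ => Sum.inr w
  invFun x := match x with
    | Sum.inl ⟨j, h⟩ => ⟨Sum.inl j, h⟩
    | Sum.inr w => ⟨Sum.inr (w, i), rfl⟩
  left_inv := by
    rintro ⟨(j | ⟨w, k⟩), h⟩
    · rfl
    · cases h; rfl
  right_inv := by rintro (⟨j, h⟩ | w) <;> rfl

noncomputable def corona_neighborSet_inr {V1 V2 : Type*} (G1 : SimpleGraph V1) (G2 : SimpleGraph V2)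
    (w : V2) (i : V1) :
    (corona G1 G2).neighborSet (Sum.inr (w, i)) ≃ (Unit ⊕ G2.neighborSet w) where
  toFun x := match x with
    | ⟨Sum.inl _, _⟩ => Sum.inl ()
    | ⟨Sum.inr (w', _), h⟩ => Sum.inr ⟨w', h.2⟩
  invFun x := match x with
    | Sum.inl _ => ⟨Sum.inl i, rfl⟩
    | Sum.inr ⟨w', h⟩ => ⟨Sum.inr (w', i), ⟨rfl, h⟩⟩
  left_inv := by
    rintro ⟨(j | ⟨w', k⟩), h⟩
    · cases h; rfl
    · obtain ⟨rfl, -⟩ := h; rfl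
  right_inv := by rintro (⟨⟩ | ⟨w', h⟩) <;> rfl

lemma corona_degree_inl {n1 n2 : ℕ} (G1 : SimpleGraph (Fin n1)) (G2 : SimpleGraph (Fin n2))
    [DecidableRel G1.Adj] (i : Fin n1) :
    (corona G1 G2).degree (Sum.inl i) = G1.degree i + n2 := by
  rw [← SimpleGraph.card_neighborSet_eq_degree, ← SimpleGraph.card_neighborSet_eq_degree,
    Fintype.card_congr (corona_neighborSet_inl G1 G2 i)]
  simp

lemma corona_degree_inr {n1 n2 : ℕ} (G1 : SimpleGraph (Fin n1)) (G2 : SimpleGraph (Fin n2))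
    [DecidableRel G2.Adj] (w : Fin n2) (i : Fin n1) :
    (corona G1 G2).degree (Sum.inr (w, i)) = G2.degree w + 1 := by
  rw [← SimpleGraph.card_neighborSet_eq_degree, ← SimpleGraph.card_neighborSet_eq_degree,
    Fintype.card_congr (corona_neighborSet_inr G1 G2 w i)]
  simp [add_comm]

/-- Block form of the Laplacian of the corona `G1 ∘ G2` for an `r1`-regular graph `G1`:
`[[L(G1) + n2 I, -1ᵀ ⊗ I], [-1 ⊗ I, (L(G2) + I) ⊗ I]]`. -/
theorem corona_lapMatrix_blocks {n1 n2 r1 : ℕ}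
    (G1 : SimpleGraph (Fin n1)) (G2 : SimpleGraph (Fin n2))
    [DecidableRel G1.Adj] [DecidableRel G2.Adj]
    (hreg : G1.IsRegularOfDegree r1) :
    (corona G1 G2).lapMatrix ℝ =
      Matrix.fromBlocks
        (G1.lapMatrix ℝ + (n2 : ℝ) • (1 : Matrix (Fin n1) (Fin n1) ℝ))
        (Matrix.of fun i (p : Fin n2 × Fin n1) =>
          -(1 : Matrix (Fin n1) (Fin n1) ℝ) i p.2)
        (Matrix.of fun (p : Fin n2 × Fin n1) i =>
          -(1 : Matrix (Fin n1) (Fin n1) ℝ) p.2 i)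
        ((G2.lapMatrix ℝ + 1) ⊗ₖ (1 : Matrix (Fin n1) (Fin n1) ℝ)) := by
  ext x y
  cases x with
  | inl i =>
    cases y with
    | inl j =>
      simp only [SimpleGraph.lapMatrix, SimpleGraph.degMatrix, Matrix.sub_apply,
        Matrix.diagonal_apply, SimpleGraph.adjMatrix_apply, Matrix.fromBlocks_apply₁₁,
        Matrix.add_apply, Matrix.smul_apply, Matrix.one_apply, smul_eq_mul]
      rw [corona_degree_inl]
      by_cases h : i = j <;> simp [h, corona, Sum.inl.injEq] <;> congr
    | inr p =>
      obtain ⟨w, k⟩ := p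
      simp only [SimpleGraph.lapMatrix, SimpleGraph.degMatrix, Matrix.sub_apply,
        Matrix.diagonal_apply, SimpleGraph.adjMatrix_apply, Matrix.fromBlocks_apply₁₂,
        Matrix.of_apply, Matrix.neg_apply, Matrix.one_apply]
      by_cases h : i = k <;> simp [h, corona]
  | inr p =>
    obtain ⟨w, i⟩ := p
    cases y with
    | inl j =>
      simp only [SimpleGraph.lapMatrix, SimpleGraph.degMatrix, Matrix.sub_apply,
        Matrix.diagonal_apply, SimpleGraph.adjMatrix_apply, Matrix.fromBlocks_apply₂₁,
        Matrix.of_apply, Matrix.neg_apply, Matrix.one_apply]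
      by_cases h : i = j <;> simp [h, corona]
    | inr p =>
      obtain ⟨w', j⟩ := p
      simp only [SimpleGraph.lapMatrix, SimpleGraph.degMatrix, Matrix.sub_apply,
        Matrix.diagonal_apply, SimpleGraph.adjMatrix_apply, Matrix.fromBlocks_apply₂₂,
        Matrix.kroneckerMap_apply, Matrix.add_apply, Matrix.one_apply]
      rw [corona_degree_inr]
      by_cases hw : w = w' <;> by_cases hi : i = j <;>
        simp [hw, hi, corona, Prod.ext_iff, G2.loopless]
end

section
/- In the corona C3∘P3, the effective resistance between the two end vertices of the same copy of P3 equals 1, and the effective resistance between an end vertex and the middle vertex of the same copy of P3 equals 5/8. -/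
/-!
A unit current entering the corona at `(a, i)` and leaving at `(b, i)` never leaves the `i`-th
copy of `G2`: the potential that vanishes off that copy (in particular at its hub `i`) and equals
on it the solution `y` of `(L(G2) + I) y = e_a - e_b` satisfies Kirchhoff's law everywhere, the
hub being balanced because `∑ y = 0`. Since the Moore–Penrose inverse `H` of the symmetric
Laplacian is symmetric and `L H L = L`, the effective resistance is the potential difference
`y a - y b`, independently of `G1`. For `P3` the potentials are `(1/2, 0, -1/2)` and
`(3/8, -1/4, -1/8)`, together with the mirror image of the latter.
-/

open Matrix Kronecker

/-- The Laplacian of the corona `C3 ∘ P3`. -/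
noncomputable def lapC3P3 :
    Matrix (Fin 3 ⊕ Fin 3 × Fin 3) (Fin 3 ⊕ Fin 3 × Fin 3) ℝ :=
  (corona (SimpleGraph.cycleGraph 3) (SimpleGraph.pathGraph 3)).lapMatrix ℝ

namespace Matrix

variable {m n R : Type*} [Fintype m] [Fintype n]

section CommSemiring

variable [CommSemiring R]

def IsMoorePenroseInverse (A : Matrix m n R) (B : Matrix n m R) : Prop :=
  A * B * A = A ∧ B * A * B = B ∧ (A * B)ᵀ = A * B ∧ (B * A)ᵀ = B * A

namespace IsMoorePenroseInverse

theorem mul_eq_mul_left {A : Matrix m n R} {B C : Matrix n m R} (hB : A.IsMoorePenroseInverse B)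
    (hC : A.IsMoorePenroseInverse C) : A * B = A * C := by
  obtain ⟨hB1, -, hB3, -⟩ := hB
  obtain ⟨hC1, -, hC3, -⟩ := hC
  calc A * B = (A * B)ᵀ := hB3.symm
    _ = (A * B)ᵀ * (A * C)ᵀ := by rw [← transpose_mul, ← Matrix.mul_assoc, hC1]
    _ = A * B * (A * C) := by rw [hB3, hC3]
    _ = A * C := by rw [← Matrix.mul_assoc, hB1]

theorem mul_eq_mul_right {A : Matrix m n R} {B C : Matrix n m R} (hB : A.IsMoorePenroseInverse B)
    (hC : A.IsMoorePenroseInverse C) : B * A = C * A := by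
  obtain ⟨hB1, -, -, hB4⟩ := hB
  obtain ⟨hC1, -, -, hC4⟩ := hC
  calc B * A = (B * A)ᵀ := hB4.symm
    _ = (C * A)ᵀ * (B * A)ᵀ := by
      rw [← transpose_mul, Matrix.mul_assoc B, ← Matrix.mul_assoc A, hC1]
    _ = C * A * (B * A) := by rw [hB4, hC4]
    _ = C * A := by rw [Matrix.mul_assoc, ← Matrix.mul_assoc A, hB1]

theorem unique {A : Matrix m n R} {B C : Matrix n m R} (hB : A.IsMoorePenroseInverse B)
    (hC : A.IsMoorePenroseInverse C) : B = C :=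
  calc B = B * A * B := hB.2.1.symm
    _ = C * A * C := by rw [Matrix.mul_assoc, hB.mul_eq_mul_left hC, ← Matrix.mul_assoc,
        hB.mul_eq_mul_right hC]
    _ = C := hC.2.1

theorem transpose {A : Matrix m n R} {B : Matrix n m R} (hB : A.IsMoorePenroseInverse B) :
    Aᵀ.IsMoorePenroseInverse Bᵀ := by
  obtain ⟨h1, h2, h3, h4⟩ := hB
  refine ⟨?_, ?_, ?_, ?_⟩
  · rw [← transpose_mul, ← transpose_mul, ← Matrix.mul_assoc, h1]
  · rw [← transpose_mul, ← transpose_mul, ← Matrix.mul_assoc, h2]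
  · rw [← transpose_mul, transpose_transpose, h4]
  · rw [← transpose_mul, transpose_transpose, h3]

theorem isSymm {A B : Matrix n n R} (hA : A.IsSymm) (hB : A.IsMoorePenroseInverse B) :
    B.IsSymm := by
  have hBt := hB.transpose
  rw [hA.eq] at hBt
  exact hB.unique hBt |>.symm

end IsMoorePenroseInverse

end CommSemiring

theorem IsMoorePenroseInverse.resistance_eq_sub_of_mulVec_eq [DecidableEq n] [CommRing R]
    {L H : Matrix n n R} (hL : L.IsSymm)
    (hH : L.IsMoorePenroseInverse H) {a b : n} {x : n → R}
    (hx : L *ᵥ x = Pi.single a 1 - Pi.single b 1) :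
    H a a + H b b - 2 * H a b = x a - x b := by
  set d : n → R := Pi.single a 1 - Pi.single b 1
  have hHab : H b a = H a b := (hH.isSymm hL).apply a b
  symm
  calc x a - x b = x ⬝ᵥ d := by simp [d, dotProduct_sub]
    _ = x ⬝ᵥ (L *ᵥ (H *ᵥ (L *ᵥ x))) := by rw [mulVec_mulVec, mulVec_mulVec, hH.1, hx]
    _ = d ⬝ᵥ (H *ᵥ d) := by
      rw [← hx, dotProduct_mulVec x L, ← mulVec_transpose, hL.eq]
    _ = H a a + H b b - 2 * H a b := by
      simp only [d, sub_dotProduct, mulVec_sub, dotProduct_sub, single_dotProduct,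
        mulVec_single_one, one_mul, col_apply, hHab]
      ring

end Matrix

namespace SimpleGraph

variable {V R : Type*} [Fintype V] [DecidableEq V] [CommRing R] (G : SimpleGraph V)
  [DecidableRel G.Adj]

theorem lapMatrix_mulVec_apply_eq_sum (x : V → R) (v : V) :
    (G.lapMatrix R *ᵥ x) v = ∑ u, if G.Adj v u then x v - x u else 0 := by
  rw [lapMatrix_mulVec_apply, degree_eq_sum_if_adj, Finset.sum_mul, neighborFinset_eq_filter,
    Finset.sum_filter, ← Finset.sum_sub_distrib]
  refine Finset.sum_congr rfl fun u _ => ?_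
  split_ifs <;> simp

theorem sum_lapMatrix_mulVec (x : V → R) : ∑ v, (G.lapMatrix R *ᵥ x) v = 0 :=
  calc ∑ v, (G.lapMatrix R *ᵥ x) v = (fun _ => 1) ⬝ᵥ (G.lapMatrix R *ᵥ x) := by
        simp [dotProduct]
    _ = (G.lapMatrix R *ᵥ fun _ => 1) ⬝ᵥ x := by
        rw [dotProduct_mulVec, ← mulVec_transpose, (G.isSymm_lapMatrix R).eq]
    _ = 0 := by rw [lapMatrix_mulVec_const_eq_zero, zero_dotProduct]

end SimpleGraph

section Corona

variable {V1 V2 : Type*} (G1 : SimpleGraph V1) (G2 : SimpleGraph V2)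

@[simp] theorem corona_adj_inl_inl {i j : V1} :
    (corona G1 G2).Adj (.inl i) (.inl j) ↔ G1.Adj i j := Iff.rfl

@[simp] theorem corona_adj_inl_inr {i k : V1} {w : V2} :
    (corona G1 G2).Adj (.inl i) (.inr (w, k)) ↔ i = k := Iff.rfl

@[simp] theorem corona_adj_inr_inl {i k : V1} {w : V2} :
    (corona G1 G2).Adj (.inr (w, k)) (.inl i) ↔ k = i := Iff.rfl

@[simp] theorem corona_adj_inr_inr {i j : V1} {w w' : V2} :
    (corona G1 G2).Adj (.inr (w, i)) (.inr (w', j)) ↔ i = j ∧ G2.Adj w w' := Iff.rfl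

variable {R : Type*} [DecidableEq V1]

def coronaCopyVec [Zero R] (i : V1) (y : V2 → R) : V1 ⊕ V2 × V1 → R :=
  Sum.elim 0 fun p => if p.2 = i then y p.1 else 0

variable [DecidableEq V2] [CommRing R]

theorem coronaCopyVec_single_sub_single (i : V1) (a b : V2) :
    coronaCopyVec i (Pi.single a 1 - Pi.single b 1 : V2 → R) =
      Pi.single (.inr (a, i)) 1 - Pi.single (.inr (b, i)) 1 := by
  ext (j | ⟨w, j⟩)
  · simp [coronaCopyVec]
  · by_cases hj : j = i <;> simp [coronaCopyVec, Pi.single_apply, hj]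

variable [Fintype V1] [Fintype V2]

theorem lapMatrix_corona_mulVec_coronaCopyVec [DecidableRel G2.Adj] (i : V1) {y : V2 → R}
    (hy : ∑ w, y w = 0) :
    (corona G1 G2).lapMatrix R *ᵥ coronaCopyVec i y =
      coronaCopyVec i ((G2.lapMatrix R + 1) *ᵥ y) := by
  ext (j | ⟨w, j⟩)
  · rw [SimpleGraph.lapMatrix_mulVec_apply_eq_sum, Fintype.sum_sum_type, Fintype.sum_prod_type]
    simp [coronaCopyVec, hy]
  · rw [SimpleGraph.lapMatrix_mulVec_apply_eq_sum, Fintype.sum_sum_type, Fintype.sum_prod_type]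
    by_cases hj : j = i
    · subst hj
      simp [coronaCopyVec, add_mulVec, SimpleGraph.lapMatrix_mulVec_apply_eq_sum, ite_and, add_comm]
    · simp [coronaCopyVec, hj, ite_and]

theorem corona_resistance_eq_sub [DecidableRel G2.Adj]
    {H : Matrix (V1 ⊕ V2 × V1) (V1 ⊕ V2 × V1) R}
    (hH : ((corona G1 G2).lapMatrix R).IsMoorePenroseInverse H) (i : V1) {a b : V2}
    {y : V2 → R} (hy : (G2.lapMatrix R + 1) *ᵥ y = Pi.single a 1 - Pi.single b 1) :
    H (.inr (a, i)) (.inr (a, i)) + H (.inr (b, i)) (.inr (b, i)) -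
      2 * H (.inr (a, i)) (.inr (b, i)) = y a - y b := by
  have hsum : ∑ w, y w = 0 := by
    have := congrArg (fun v => ∑ w, v w) hy
    simpa [add_mulVec, Finset.sum_add_distrib, G2.sum_lapMatrix_mulVec] using this
  have hx := lapMatrix_corona_mulVec_coronaCopyVec G1 G2 i hsum
  rw [hy, coronaCopyVec_single_sub_single] at hx
  simpa [coronaCopyVec] using
    hH.resistance_eq_sub_of_mulVec_eq ((corona G1 G2).isSymm_lapMatrix R) hx

end Corona

open SimpleGraph in
theorem lapMatrix_pathGraph_three_add_one {R : Type*} [CommRing R]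
    [DecidableRel (pathGraph 3).Adj] :
    (pathGraph 3).lapMatrix R + 1 = !![2, -1, 0; -1, 3, -1; 0, -1, 2] := by
  ext i j
  rw [Matrix.add_apply, lapMatrix, Matrix.sub_apply, degMatrix, diagonal_apply, adjMatrix_apply,
    degree_eq_sum_if_adj]
  fin_cases i <;> fin_cases j <;>
    simp [Fin.sum_univ_three, pathGraph_adj, one_apply, -Finset.sum_boole] <;> norm_num

/-- In `C3 ∘ P3`, inside one copy of `P3` (vertices `0 - 1 - 2`): the effective resistance
between the two end vertices is `1`, and between an end vertex and the middle vertex it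
is `5/8`. -/
theorem resistance_C3P3_within_copy
    (H : Matrix (Fin 3 ⊕ Fin 3 × Fin 3) (Fin 3 ⊕ Fin 3 × Fin 3) ℝ)
    (hH1 : lapC3P3 * H * lapC3P3 = lapC3P3)
    (hH2 : H * lapC3P3 * H = H)
    (hH3 : (lapC3P3 * H)ᵀ = lapC3P3 * H)
    (hH4 : (H * lapC3P3)ᵀ = H * lapC3P3)
    (i : Fin 3) :
    (H (Sum.inr (0, i)) (Sum.inr (0, i)) + H (Sum.inr (2, i)) (Sum.inr (2, i)) -
      2 * H (Sum.inr (0, i)) (Sum.inr (2, i)) = 1) ∧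
    (H (Sum.inr (0, i)) (Sum.inr (0, i)) + H (Sum.inr (1, i)) (Sum.inr (1, i)) -
      2 * H (Sum.inr (0, i)) (Sum.inr (1, i)) = 5 / 8) ∧
    (H (Sum.inr (2, i)) (Sum.inr (2, i)) + H (Sum.inr (1, i)) (Sum.inr (1, i)) -
      2 * H (Sum.inr (2, i)) (Sum.inr (1, i)) = 5 / 8) := by
  classical
  have hH : lapC3P3.IsMoorePenroseInverse H := ⟨hH1, hH2, hH3, hH4⟩
  have resistance_eq {a b : Fin 3} (y : Fin 3 → ℝ)
      (hy : !![2, -1, 0; -1, 3, -1; 0, -1, 2] *ᵥ y = Pi.single a 1 - Pi.single b 1) :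
      H (.inr (a, i)) (.inr (a, i)) + H (.inr (b, i)) (.inr (b, i)) -
        2 * H (.inr (a, i)) (.inr (b, i)) = y a - y b :=
    corona_resistance_eq_sub _ _ hH i (by rwa [lapMatrix_pathGraph_three_add_one])
  refine ⟨?_, ?_, ?_⟩
  · rw [resistance_eq ![1 / 2, 0, -1 / 2]]
    · norm_num [Matrix.cons_val_two]
    · ext w; fin_cases w <;> simp [mulVec, dotProduct, Fin.sum_univ_three] <;> norm_num
  · rw [resistance_eq ![3 / 8, -1 / 4, -1 / 8]]
    · norm_num [Matrix.cons_val_two]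
    · ext w; fin_cases w <;> simp [mulVec, dotProduct, Fin.sum_univ_three] <;> norm_num
  · rw [resistance_eq ![-1 / 8, -1 / 4, 3 / 8]]
    · norm_num [Matrix.cons_val_two]
    · ext w; fin_cases w <;> simp [mulVec, dotProduct, Fin.sum_univ_three] <;> norm_num
end
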